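/- arXiv:1001.2381 — 2 statements merged into one kernel-verified Lean document; each statement's English description precedes it below -/
import Mathlib

section
/- Let T > 0, let h : ℝ → ℝ be Lipschitz with constant c, let x : [0,T] → ℝ be càdlàg, and let y : [0,T] → ℝ be a bounded Borel measurable function satisfying y(t) = x(t) + ∫₀ᵗ h(y(s)) ds for all t ∈ [0,T]. Then the function t ↦ y(t) − x(t) is Lipschitz continuous on [0,T]; consequently y is càdlàg on [0,T] and the locations and sizes of the jumps of x and y coincide: for every t ∈ (0,T], y(t) − y(t−) = x(t) − x(t−). (Lemma 3.1, jump-coincidence.) -/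
open Set Filter MeasureTheory Topology

/-- The left limit of `x` at `t`, with the convention `x(0−) = x(0)`. -/
noncomputable def leftL (x : ℝ → ℝ) (t : ℝ) : ℝ :=
  if t = 0 then x 0 else Function.leftLim x t

/-- `x` is càdlàg on `[0, T]`: right-continuous on `[0, T)` and with left limits on `(0, T]`. -/
def IsCadlagOn (T : ℝ) (x : ℝ → ℝ) : Prop :=
  (∀ t ∈ Set.Ico (0:ℝ) T, Filter.Tendsto x (nhdsWithin t (Set.Ici t)) (nhds (x t))) ∧
  (∀ t ∈ Set.Ioc (0:ℝ) T, ∃ L : ℝ, Filter.Tendsto x (nhdsWithin t (Set.Iio t)) (nhds L))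

/-- `(u, r)` is a parametric representation of the càdlàg function `x` on `[0, T]`. -/
def IsParamRep (T : ℝ) (x u r : ℝ → ℝ) : Prop :=
  ContinuousOn u (Set.Icc 0 1) ∧ ContinuousOn r (Set.Icc 0 1) ∧
  MonotoneOn r (Set.Icc 0 1) ∧ r 0 = 0 ∧ r 1 = T ∧
  (∀ s ∈ Set.Icc (0:ℝ) 1, u s ∈ segment ℝ (leftL x (r s)) (x (r s))) ∧
  (∀ t ∈ Set.Icc (0:ℝ) T, ∀ v ∈ segment ℝ (leftL x t) (x t),
    ∃ s ∈ Set.Icc (0:ℝ) 1, r s = t ∧ u s = v) ∧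
  (∀ s₁ ∈ Set.Icc (0:ℝ) 1, ∀ s₂ ∈ Set.Icc (0:ℝ) 1, s₁ ≤ s₂ → r s₁ = r s₂ →
    0 ≤ (u s₂ - u s₁) * (x (r s₁) - leftL x (r s₁)))

/-- Uniform norm over `[0, 1]`. -/
noncomputable def unif (f : ℝ → ℝ) : ℝ := ⨆ s : Set.Icc (0:ℝ) 1, |f s.1|

/-- Uniform norm over `[0, T]`. -/
noncomputable def supT (T : ℝ) (f : ℝ → ℝ) : ℝ := ⨆ t : Set.Icc (0:ℝ) T, |f t.1|

/-- The maximum-jump functional `J_max(x)` over `[0, T]`. -/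
noncomputable def Jmax (T : ℝ) (x : ℝ → ℝ) : ℝ :=
  ⨆ t : Set.Icc (0:ℝ) T, |x t.1 - leftL x t.1|

/-- The Skorohod `M₁` metric on `D([0, T], ℝ)`. -/
noncomputable def dM1 (T : ℝ) (x y : ℝ → ℝ) : ℝ :=
  sInf {d : ℝ | ∃ ux rx uy ry : ℝ → ℝ, IsParamRep T x ux rx ∧ IsParamRep T y uy ry ∧
    d = max (unif fun s => ux s - uy s) (unif fun s => rx s - ry s)}

/-- The `L₁` norm over `[0, 1]`. -/
noncomputable def L1norm (g : ℝ → ℝ) : ℝ := ∫ s in (0:ℝ)..1, |g s|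

/-- `r` is absolutely continuous on `[0,1]` with (integrable) derivative `r'`. -/
def AbsContOn01 (r r' : ℝ → ℝ) : Prop :=
  IntervalIntegrable r' MeasureTheory.volume 0 1 ∧
  ∀ s ∈ Set.Icc (0:ℝ) 1, r s = r 0 + ∫ w in (0:ℝ)..s, r' w

/-- `y` is bounded and Borel measurable on `[0, T]`. -/
def BddMeasOn (T : ℝ) (y : ℝ → ℝ) : Prop :=
  (∃ M : ℝ, ∀ t ∈ Set.Icc (0:ℝ) T, |y t| ≤ M) ∧
  Measurable fun t : Set.Icc (0:ℝ) T => y t.1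

/-- The `M₁` oscillation function `w_s(x, δ)` on `[0, T]`. -/
noncomputable def wOsc (T : ℝ) (x : ℝ → ℝ) (δ : ℝ) : ℝ :=
  sSup {v : ℝ | ∃ t ∈ Set.Icc (0:ℝ) T, ∃ t₁ t₂ t₃ : ℝ,
    max 0 (t - δ) ≤ t₁ ∧ t₁ < t₂ ∧ t₂ < t₃ ∧ t₃ ≤ min (t + δ) T ∧
    v = Metric.infDist (x t₂) (segment ℝ (x t₁) (x t₃))}

/-- The ordinary oscillation modulus `ν(x, δ)` on `[0, T]`. -/
noncomputable def nuOsc (T : ℝ) (x : ℝ → ℝ) (δ : ℝ) : ℝ :=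
  sSup {v : ℝ | ∃ t ∈ Set.Icc (0:ℝ) (T - δ), ∃ t₁ ∈ Set.Icc t (t + δ),
    ∃ t₂ ∈ Set.Icc t (t + δ), v = |x t₁ - x t₂|}

/-! On `[0, T]`, `y - x` is the primitive of the bounded measurable function `h ∘ y`, hence
Lipschitz. Adding a function that is continuous on `[0, T]` to a càdlàg function keeps it càdlàg
and shifts its left limit at `t` by the value at `t`, so the jumps do not change. -/

namespace BddMeasOn

variable {T : ℝ} {g : ℝ → ℝ}

theorem comp (hg : BddMeasOn T g) {h : ℝ → ℝ} (hh : Continuous h) : BddMeasOn T (h ∘ g) := by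
  obtain ⟨⟨M, hM⟩, hmeas⟩ := hg
  obtain ⟨B, hB⟩ := isCompact_Icc.exists_bound_of_continuousOn (s := Icc (-M) M) hh.continuousOn
  exact ⟨⟨B, fun t ht => hB (g t) (abs_le.mp (hM t ht))⟩, hh.measurable.comp hmeas⟩

theorem integrableOn (hg : BddMeasOn T g) : IntegrableOn g (Icc 0 T) := by
  obtain ⟨⟨M, hM⟩, hmeas⟩ := hg
  have hae : AEStronglyMeasurable g (volume.restrict (Icc 0 T)) :=
    ((aemeasurable_restrict_iff_comap_subtype measurableSet_Icc).mpr
      hmeas.aemeasurable).aestronglyMeasurable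
  refine .of_bound measure_Icc_lt_top hae M ?_
  filter_upwards [ae_restrict_mem measurableSet_Icc] with t ht using hM t ht

theorem exists_lipschitzOnWith_primitive (hg : BddMeasOn T g) :
    ∃ K, LipschitzOnWith K (fun t => ∫ s in (0:ℝ)..t, g s) (Icc 0 T) := by
  obtain ⟨M, hM⟩ := hg.1
  have hint : ∀ t ∈ Icc 0 T, IntervalIntegrable g volume 0 t := fun t ht =>
    (intervalIntegrable_iff_integrableOn_Icc_of_le ht.1).mpr
      (hg.integrableOn.mono_set (Icc_subset_Icc_right ht.2))
  refine ⟨M.toNNReal, .of_dist_le' fun t₁ ht₁ t₂ ht₂ => ?_⟩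
  rw [Real.dist_eq, Real.dist_eq, intervalIntegral.integral_interval_sub_left (hint t₁ ht₁)
    (hint t₂ ht₂)]
  exact intervalIntegral.norm_integral_le_of_norm_le_const (f := g) fun s hs =>
    hM s (uIcc_subset_Icc ht₂ ht₁ (uIoc_subset_uIcc hs))

end BddMeasOn

section Cadlag

variable {T t : ℝ} {x d : ℝ → ℝ}

theorem nhdsGE_le_nhdsWithin_Icc {a b : ℝ} (ht : t ∈ Ico a b) : 𝓝[≥] t ≤ 𝓝[Icc a b] t :=
  nhdsWithin_le_of_mem <| mem_of_superset (Ico_mem_nhdsGE ht.2)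
    fun _ hs => ⟨ht.1.trans hs.1, hs.2.le⟩

theorem nhdsLT_le_nhdsWithin_Icc {a b : ℝ} (ht : t ∈ Ioc a b) : 𝓝[<] t ≤ 𝓝[Icc a b] t :=
  nhdsWithin_le_of_mem <| mem_of_superset (Ioo_mem_nhdsLT ht.1)
    fun _ hs => ⟨hs.1.le, hs.2.le.trans ht.2⟩

theorem IsCadlagOn.add_continuousOn (hx : IsCadlagOn T x) (hd : ContinuousOn d (Icc 0 T)) :
    IsCadlagOn T (x + d) := by
  refine ⟨fun t ht => ?_, fun t ht => ?_⟩
  · exact (hx.1 t ht).add <| (hd t (Ico_subset_Icc_self ht)).mono_left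
      (nhdsGE_le_nhdsWithin_Icc ht)
  · obtain ⟨L, hL⟩ := hx.2 t ht
    exact ⟨L + d t, hL.add <| (hd t (Ioc_subset_Icc_self ht)).mono_left
      (nhdsLT_le_nhdsWithin_Icc ht)⟩

theorem IsCadlagOn.leftL_add_continuousOn (hx : IsCadlagOn T x) (hd : ContinuousOn d (Icc 0 T))
    (ht : t ∈ Ioc 0 T) : leftL (x + d) t = leftL x t + d t := by
  obtain ⟨L, hL⟩ := hx.2 t ht
  have hsum : Tendsto (x + d) (𝓝[<] t) (𝓝 (L + d t)) :=
    hL.add <| (hd t (Ioc_subset_Icc_self ht)).mono_left (nhdsLT_le_nhdsWithin_Icc ht)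
  rw [leftL, leftL, if_neg ht.1.ne', if_neg ht.1.ne', leftLim_eq_of_tendsto hL,
    leftLim_eq_of_tendsto hsum]

end Cadlag

theorem jump_coincidence_general
    (T : ℝ) (c : ℝ) (h : ℝ → ℝ)
    (hLip : ∀ w₁ w₂ : ℝ, |h w₁ - h w₂| ≤ c * |w₁ - w₂|)
    (x y : ℝ → ℝ) (hx : IsCadlagOn T x) (hyb : BddMeasOn T y)
    (hy : ∀ t ∈ Set.Icc (0:ℝ) T, y t = x t + ∫ s in (0:ℝ)..t, h (y s)) :
    (∃ K : ℝ, 0 ≤ K ∧ ∀ t₁ ∈ Set.Icc (0:ℝ) T, ∀ t₂ ∈ Set.Icc (0:ℝ) T,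
      |(y t₁ - x t₁) - (y t₂ - x t₂)| ≤ K * |t₁ - t₂|) ∧
    IsCadlagOn T y ∧
    (∀ t ∈ Set.Ioc (0:ℝ) T, y t - leftL y t = x t - leftL x t) := by
  have hh : Continuous h := (LipschitzWith.of_dist_le' hLip).continuous
  obtain ⟨K, hK⟩ := (hyb.comp hh).exists_lipschitzOnWith_primitive
  have hdiff : LipschitzOnWith K (y - x) (Icc 0 T) :=
    fun a ha b hb => by
      simpa only [Pi.sub_apply, Function.comp_apply, hy a ha, hy b hb, add_sub_cancel_left]
        using hK ha hb
  refine ⟨⟨K, K.2, fun t₁ ht₁ t₂ ht₂ => hdiff.dist_le_mul t₁ ht₁ t₂ ht₂⟩, ?_, fun t ht => ?_⟩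
  · simpa only [add_sub_cancel] using hx.add_continuousOn hdiff.continuousOn
  · have hyL := hx.leftL_add_continuousOn hdiff.continuousOn ht
    rw [add_sub_cancel] at hyL
    rw [hyL, Pi.sub_apply]
    ring

/-- Lemma 3.1 (jump coincidence): `y - x` is Lipschitz on `[0,T]`, hence `y` is
càdlàg and the jumps of `x` and `y` coincide in location and size. -/
theorem jump_coincidence
    (T : ℝ) (hT : 0 < T) (c : ℝ) (h : ℝ → ℝ)
    (hLip : ∀ w₁ w₂ : ℝ, |h w₁ - h w₂| ≤ c * |w₁ - w₂|)
    (x y : ℝ → ℝ) (hx : IsCadlagOn T x) (hyb : BddMeasOn T y)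
    (hy : ∀ t ∈ Set.Icc (0:ℝ) T, y t = x t + ∫ s in (0:ℝ)..t, h (y s)) :
    (∃ K : ℝ, 0 ≤ K ∧ ∀ t₁ ∈ Set.Icc (0:ℝ) T, ∀ t₂ ∈ Set.Icc (0:ℝ) T,
      |(y t₁ - x t₁) - (y t₂ - x t₂)| ≤ K * |t₁ - t₂|) ∧
    IsCadlagOn T y ∧
    (∀ t ∈ Set.Ioc (0:ℝ) T, y t - leftL y t = x t - leftL x t) :=
  jump_coincidence_general T c h hLip x y hx hyb hy
end

section
/- Let T > 0 and let x and x_n (n ∈ ℕ) be càdlàg functions on [0,T]. Suppose there exist parametric representations (u, r) ∈ Π(x) and (u_n, r_n) ∈ Π(x_n) such that max(‖u_n − u‖, ‖r_n − r‖) → 0 as n → ∞ (i.e., x_n → x in M₁). Then limsup_{n→∞} J_max(x_n) ≤ J_max(x). (Lemma 4.1.) -/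
open Set Filter MeasureTheory Topology

/-!
A jump of `xₙ` at `t` is traversed by `uₙ` on a parameter interval `[a, b]` on which `rₙ` is
constant, so by uniform convergence `r₀` moves by little on `[a, b]`. Where `r₀ a = r₀ b`, the
values `u₀ a` and `u₀ b` lie on one jump segment of `x₀`, so `|u₀ b - u₀ a| ≤ J_max(x₀)`; by
compactness of the parameter set, `r₀ b - r₀ a ≤ ε` still gives `|u₀ b - u₀ a| < J_max(x₀) + δ`.
Hence every jump of `xₙ` is eventually below `J_max(x₀) + 2δ`.
-/

theorem IsCompact.exists_pos_forall_lt_of_forall_nonpos {X : Type*} [TopologicalSpace X]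
    [T2Space X] {K : Set X} {g h : X → ℝ} {c : ℝ} (hK : IsCompact K) (hg : ContinuousOn g K)
    (hh : ContinuousOn h K) (hgh : ∀ p ∈ K, h p ≤ 0 → g p < c) :
    ∃ ε > 0, ∀ p ∈ K, h p ≤ ε → g p < c := by
  set K' := K ∩ g ⁻¹' Ici c
  have hK' : IsCompact K' := hK.of_isClosed_subset
    (hg.preimage_isClosed_of_isClosed hK.isClosed isClosed_Ici) inter_subset_left
  rcases K'.eq_empty_or_nonempty with hempty | hne
  · refine ⟨1, one_pos, fun p hp _ => ?_⟩
    by_contra! hc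
    exact hempty.subset ⟨hp, hc⟩
  · obtain ⟨p₀, ⟨hp₀, hcp₀⟩, hmin⟩ := hK'.exists_isMinOn hne (hh.mono inter_subset_left)
    have hpos : 0 < h p₀ := by
      by_contra! h0
      exact (hgh p₀ hp₀ h0).not_ge hcp₀
    refine ⟨h p₀ / 2, half_pos hpos, fun p hp hhp => ?_⟩
    by_contra! hc
    have hle : h p₀ ≤ h p := hmin (show p ∈ K' from ⟨hp, hc⟩)
    linarith

theorem abs_le_unif {f : ℝ → ℝ} (hf : ContinuousOn f (Icc 0 1)) {s : ℝ} (hs : s ∈ Icc (0:ℝ) 1) :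
    |f s| ≤ unif f := by
  obtain ⟨C, hC⟩ := isCompact_Icc.exists_bound_of_continuousOn hf
  exact le_ciSup ⟨C, by rintro _ ⟨t, rfl⟩; exact hC t.1 t.2⟩ (⟨s, hs⟩ : Icc (0:ℝ) 1)

theorem Jmax_nonneg (T : ℝ) (x : ℝ → ℝ) : 0 ≤ Jmax T x :=
  Real.iSup_nonneg fun _ => abs_nonneg _

theorem Jmax_le {T c : ℝ} {x : ℝ → ℝ} (hx : ∀ t ∈ Icc 0 T, |x t - leftL x t| ≤ c)
    (hc : 0 ≤ c) : Jmax T x ≤ c :=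
  Real.iSup_le (fun t => hx t.1 t.2) hc

namespace IsParamRep

variable {T : ℝ} {x u r : ℝ → ℝ}

theorem mapsTo (h : IsParamRep T x u r) : MapsTo r (Icc 0 1) (Icc 0 T) := by
  obtain ⟨-, -, hmono, h0, h1, -⟩ := h
  intro s hs
  exact ⟨h0 ▸ hmono (left_mem_Icc.2 zero_le_one) hs hs.1,
    h1 ▸ hmono hs (right_mem_Icc.2 zero_le_one) hs.2⟩

theorem mem_segment (h : IsParamRep T x u r) {s : ℝ} (hs : s ∈ Icc (0:ℝ) 1) :
    u s ∈ segment ℝ (leftL x (r s)) (x (r s)) :=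
  h.2.2.2.2.2.1 s hs

theorem exists_eq_of_mem_segment (h : IsParamRep T x u r) {t v : ℝ} (ht : t ∈ Icc 0 T)
    (hv : v ∈ segment ℝ (leftL x t) (x t)) : ∃ s ∈ Icc (0:ℝ) 1, r s = t ∧ u s = v :=
  h.2.2.2.2.2.2.1 t ht v hv

theorem exists_jump_eq (h : IsParamRep T x u r) {t : ℝ} (ht : t ∈ Icc 0 T) :
    ∃ a ∈ Icc (0:ℝ) 1, ∃ b ∈ Icc (0:ℝ) 1, a ≤ b ∧ r a = r b ∧
      |x t - leftL x t| = |u b - u a| := by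
  obtain ⟨s₁, hs₁, hr₁, hu₁⟩ := h.exists_eq_of_mem_segment ht (left_mem_segment ℝ _ _)
  obtain ⟨s₂, hs₂, hr₂, hu₂⟩ := h.exists_eq_of_mem_segment ht (right_mem_segment ℝ _ _)
  rcases le_total s₁ s₂ with h12 | h21
  · exact ⟨s₁, hs₁, s₂, hs₂, h12, hr₁.trans hr₂.symm, by rw [hu₁, hu₂]⟩
  · exact ⟨s₂, hs₂, s₁, hs₁, h21, hr₂.trans hr₁.symm, by rw [hu₁, hu₂, abs_sub_comm]⟩

theorem bddAbove_jumps (h : IsParamRep T x u r) :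
    BddAbove (range fun t : Icc 0 T => |x t.1 - leftL x t.1|) := by
  obtain ⟨M, hM⟩ := isCompact_Icc.exists_bound_of_continuousOn h.1
  refine ⟨2 * M, ?_⟩
  rintro _ ⟨t, rfl⟩
  obtain ⟨a, ha, b, hb, -, -, hjump⟩ := h.exists_jump_eq t.2
  have hua := hM a ha
  have hub := hM b hb
  rw [Real.norm_eq_abs] at hua hub
  linarith [abs_sub (u b) (u a)]

theorem jump_le_Jmax (h : IsParamRep T x u r) {t : ℝ} (ht : t ∈ Icc 0 T) :
    |x t - leftL x t| ≤ Jmax T x :=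
  le_ciSup h.bddAbove_jumps (⟨t, ht⟩ : Icc 0 T)

theorem abs_sub_le_Jmax_of_eq (h : IsParamRep T x u r) {a b : ℝ} (ha : a ∈ Icc (0:ℝ) 1)
    (hb : b ∈ Icc (0:ℝ) 1) (hab : r a = r b) : |u b - u a| ≤ Jmax T x := by
  have hua := h.mem_segment ha
  have hub := h.mem_segment hb
  rw [← hab] at hub
  rw [segment_eq_uIcc] at hua hub
  calc |u b - u a| ≤ |x (r a) - leftL x (r a)| :=
        abs_sub_le_of_uIcc_subset_uIcc (uIcc_subset_uIcc hua hub)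
    _ ≤ Jmax T x := h.jump_le_Jmax (h.mapsTo ha)

theorem exists_pos_abs_sub_lt (h : IsParamRep T x u r) {δ : ℝ} (hδ : 0 < δ) :
    ∃ ε > 0, ∀ a ∈ Icc (0:ℝ) 1, ∀ b ∈ Icc (0:ℝ) 1, a ≤ b → r b - r a ≤ ε →
      |u b - u a| < Jmax T x + δ := by
  set K : Set (ℝ × ℝ) := (Icc 0 1 ×ˢ Icc 0 1) ∩ {p | p.1 ≤ p.2}
  have hK : IsCompact K :=
    (isCompact_Icc.prod isCompact_Icc).inter_right (isClosed_le continuous_fst continuous_snd)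
  have hfst : MapsTo Prod.fst K (Icc 0 1) := fun p hp => hp.1.1
  have hsnd : MapsTo Prod.snd K (Icc 0 1) := fun p hp => hp.1.2
  have hu : ContinuousOn u (Icc 0 1) := h.1
  have hr : ContinuousOn r (Icc 0 1) := h.2.1
  have hmono : MonotoneOn r (Icc 0 1) := h.2.2.1
  obtain ⟨ε, hε, hεK⟩ := hK.exists_pos_forall_lt_of_forall_nonpos
    (g := fun p : ℝ × ℝ => |u p.2 - u p.1|) (h := fun p : ℝ × ℝ => r p.2 - r p.1)
    (c := Jmax T x + δ)
    ((hu.comp continuousOn_snd hsnd).sub (hu.comp continuousOn_fst hfst)).abs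
    ((hr.comp continuousOn_snd hsnd).sub (hr.comp continuousOn_fst hfst))
    (fun p ⟨⟨h₁, h₂⟩, h₁₂⟩ hp => by
      have hr₁₂ := hmono h₁ h₂ h₁₂
      have := h.abs_sub_le_Jmax_of_eq h₁ h₂ (by linarith)
      linarith)
  exact ⟨ε, hε, fun a ha b hb hab hrab => hεK (a, b) ⟨⟨ha, hb⟩, hab⟩ hrab⟩

theorem Jmax_le_of_near {y v q : ℝ → ℝ} {m c : ℝ} (hy : IsParamRep T y v q)
    (hur : ∀ a ∈ Icc (0:ℝ) 1, ∀ b ∈ Icc (0:ℝ) 1, a ≤ b → r b - r a ≤ 2 * m → |u b - u a| ≤ c)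
    (hvu : ∀ s ∈ Icc (0:ℝ) 1, |v s - u s| ≤ m) (hqr : ∀ s ∈ Icc (0:ℝ) 1, |q s - r s| ≤ m) :
    Jmax T y ≤ c + 2 * m := by
  have h0 : (0:ℝ) ∈ Icc (0:ℝ) 1 := left_mem_Icc.2 zero_le_one
  have hm : 0 ≤ m := (abs_nonneg _).trans (hvu 0 h0)
  have hc : 0 ≤ c := by simpa using hur 0 h0 0 h0 le_rfl (by simpa using hm)
  refine Jmax_le (fun t ht => ?_) (by positivity)
  obtain ⟨a, ha, b, hb, hab, hqab, hjump⟩ := hy.exists_jump_eq ht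
  have hra := abs_le.1 (hqr a ha)
  have hrb := abs_le.1 (hqr b hb)
  have hua := abs_le.1 (hvu a ha)
  have hub := abs_le.1 (hvu b hb)
  have hu := abs_le.1 (hur a ha b hb hab (by linarith))
  rw [hjump, abs_le]
  constructor <;> linarith

end IsParamRep

theorem limsup_jmax_le_general
    (T : ℝ)
    (x : ℕ → ℝ → ℝ) (x₀ : ℝ → ℝ)
    (u0 r0 : ℝ → ℝ) (un rn : ℕ → ℝ → ℝ)
    (h0 : IsParamRep T x₀ u0 r0) (hn : ∀ n, IsParamRep T (x n) (un n) (rn n))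
    (hconv : Filter.Tendsto
      (fun n => max (unif fun s => un n s - u0 s) (unif fun s => rn n s - r0 s))
      Filter.atTop (nhds 0)) :
    Filter.limsup (fun n => Jmax T (x n)) Filter.atTop ≤ Jmax T x₀ := by
  refine le_of_forall_pos_le_add fun δ hδ => ?_
  obtain ⟨ε, hε, hu0⟩ := h0.exists_pos_abs_sub_lt (half_pos hδ)
  set m := min (ε / 2) (δ / 4)
  have hm : 0 < m := lt_min (by linarith) (by linarith)
  have hmε : 2 * m ≤ ε := by linarith [min_le_left (ε / 2) (δ / 4)]
  have hmδ : 2 * m ≤ δ / 2 := by linarith [min_le_right (ε / 2) (δ / 4)]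
  refine limsup_le_of_le (isCoboundedUnder_le_of_le atTop fun n => Jmax_nonneg T (x n)) ?_
  filter_upwards [hconv.eventually_lt_const hm] with n hnm
  have hu := (hn n).1.sub h0.1
  have hr := (hn n).2.1.sub h0.2.1
  calc Jmax T (x n) ≤ (Jmax T x₀ + δ / 2) + 2 * m :=
        (hn n).Jmax_le_of_near (fun a ha b hb hab hrab => (hu0 a ha b hb hab (hrab.trans hmε)).le)
          (fun s hs => ((abs_le_unif hu hs).trans (le_max_left _ _)).trans hnm.le)
          (fun s hs => ((abs_le_unif hr hs).trans (le_max_right _ _)).trans hnm.le)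
    _ ≤ Jmax T x₀ + δ := by linarith

/-- Lemma 4.1: if `xₙ → x` in `(D, M₁)` then `limsup J_max(xₙ) ≤ J_max(x)`. -/
theorem limsup_jmax_le
    (T : ℝ) (hT : 0 < T)
    (x : ℕ → ℝ → ℝ) (x₀ : ℝ → ℝ)
    (hxc : ∀ n, IsCadlagOn T (x n)) (hx₀c : IsCadlagOn T x₀)
    (u0 r0 : ℝ → ℝ) (un rn : ℕ → ℝ → ℝ)
    (h0 : IsParamRep T x₀ u0 r0) (hn : ∀ n, IsParamRep T (x n) (un n) (rn n))
    (hconv : Filter.Tendsto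
      (fun n => max (unif fun s => un n s - u0 s) (unif fun s => rn n s - r0 s))
      Filter.atTop (nhds 0)) :
    Filter.limsup (fun n => Jmax T (x n)) Filter.atTop ≤ Jmax T x₀ :=
  limsup_jmax_le_general T x x₀ u0 r0 un rn h0 hn hconv
end
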